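/- Let Q=(V,E,s,t) be a finite quiver without cycles of length m, with starting set S and associated quiver Q'=(V',E',s',t'). Then every automorphism f ∈ Aut(Q) satisfies f(Path(Q')) = Path(Q'), and the restriction f|_{E'} is an automorphism of Q'. -/

import Mathlib

open scoped Classical

noncomputable section

variable {V E : Type*}

/-- A (positive-length) path in the quiver `(V, E, s, t)`: a nonempty list of arrows
in which consecutive arrows are composable, i.e. `t αᵢ = s αᵢ₊₁`. -/
def IsPath (s t : E → V) (l : List E) : Prop :=
  l ≠ [] ∧ l.Chain' (fun a b => t a = s b)

/-- The source of a (nonempty) list of arrows, as an `Option`. -/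
def src? (s : E → V) (l : List E) : Option V := l.head?.map s

/-- The target of a (nonempty) list of arrows, as an `Option`. -/
def tgt? (t : E → V) (l : List E) : Option V := l.getLast?.map t

/-- The quiver has no cycles: there is no path whose source equals its target. -/
def NoCycles (s t : E → V) : Prop :=
  ∀ l : List E, IsPath s t l → src? s l ≠ tgt? t l

/-- `m` is the maximum of the lengths of paths of the quiver (the length of the quiver). -/
def IsMaxPathLen (s t : E → V) (m : ℕ) : Prop :=
  (∃ l : List E, IsPath s t l ∧ l.length = m) ∧ ∀ l : List E, IsPath s t l → l.length ≤ m

/-- The set `Path(Q)` of all paths of length `≥ 1`, as a subtype of lists of arrows. -/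
abbrev PathQ (s t : E → V) := {l : List E // IsPath s t l}

/-- The underlying vector space of the Lie algebra `n_Q` obtained from the quiver:
the real vector space with basis `Path(Q)`. -/
abbrev nQ (s t : E → V) := PathQ s t →₀ ℝ

/-- The Lie bracket of two basis paths: `[x, y] = xy` if the concatenation `xy` is a path,
`[x, y] = -yx` if the concatenation `yx` is a path, and `[x, y] = 0` otherwise. -/
def braBasis (s t : E → V) (x y : PathQ s t) : nQ s t :=
  if h : IsPath s t (x.val ++ y.val) then Finsupp.single ⟨x.val ++ y.val, h⟩ 1
  else if h' : IsPath s t (y.val ++ x.val) then -Finsupp.single ⟨y.val ++ x.val, h'⟩ 1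
  else 0

/-- The Lie bracket of `n_Q`, extended bilinearly from basis paths. -/
def bra (s t : E → V) (u v : nQ s t) : nQ s t :=
  u.sum fun x cx => v.sum fun y cy => (cx * cy) • braBasis s t x y

/-- The span of all brackets of elements of two subspaces of `n_Q`. -/
def braSpan (s t : E → V) (M N : Submodule ℝ (nQ s t)) : Submodule ℝ (nQ s t) :=
  Submodule.span ℝ {z | ∃ u ∈ M, ∃ v ∈ N, z = bra s t u v}

/-- The starting set `S` of a quiver of length `m`: the set of arrows `a` such that
`a x` is a path of length `m` for some path `x`. -/
def startSet (s t : E → V) (m : ℕ) : Set E :=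
  {a | ∃ x : List E, IsPath s t x ∧ IsPath s t (a :: x) ∧ (a :: x).length = m}

/-- The arrow set `E' = (E ∖ S) ∪ {ab ∈ Path(Q) : a ∈ S, b ∈ E}` of the quiver `Q'`,
realized as a set of lists of arrows of `Q`. -/
def edgesQ' (s t : E → V) (m : ℕ) : Set (List E) :=
  {l | (∃ a : E, a ∉ startSet s t m ∧ l = [a]) ∨
       (∃ a b : E, a ∈ startSet s t m ∧ IsPath s t [a, b] ∧ l = [a, b])}

/-- `L` is a decomposition of the list `l` of arrows as a path of the quiver `Q'`:
a nonempty chain of consecutively composable `Q'`-arrows whose concatenation is `l`. -/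
def IsDecompQ' (s t : E → V) (m : ℕ) (L : List (List E)) (l : List E) : Prop :=
  L ≠ [] ∧ (∀ p ∈ L, p ∈ edgesQ' s t m) ∧
    L.Chain' (fun p q => tgt? t p = src? s q) ∧ L.flatten = l

/-- `l` underlies a path of the quiver `Q'`. -/
def IsPathQ' (s t : E → V) (m : ℕ) (l : List E) : Prop :=
  ∃ L : List (List E), IsDecompQ' s t m L l

/-- `f : E → E` is an automorphism of the quiver `(V, E, s, t)`. -/
def IsQuivAut (s t : E → V) (f : E → E) : Prop :=
  Function.Bijective f ∧ ∀ x y : E, (t x = s y ↔ t (f x) = s (f y))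

/-- `g` is an automorphism of the quiver whose arrow set is the set `ES` of lists of
arrows of `Q` (such as the quiver `Q'` with arrow set `edgesQ'`). -/
def IsQuivAutOn (s t : E → V) (ES : Set (List E)) (g : List E → List E) : Prop :=
  Set.BijOn g ES ES ∧
    ∀ p ∈ ES, ∀ q ∈ ES, (tgt? t p = src? s q ↔ tgt? t (g p) = src? s (g q))

/-- The subspace `n' = span Path(Q')` of `n_Q`. -/
def nQ'span (s t : E → V) (m : ℕ) : Submodule ℝ (nQ s t) :=
  Submodule.span ℝ {u | ∃ p : PathQ s t, IsPathQ' s t m p.val ∧ u = Finsupp.single p 1}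

/-- A single arrow, regarded as a path of length one. -/
def edgePath (s t : E → V) (a : E) : PathQ s t := ⟨[a], by
  refine ⟨by simp, ?_⟩
  first
  | exact List.chain'_singleton _
  | exact List.IsChain.singleton _
  | simp [List.Chain']
  | constructor⟩

namespace IsQuivAut

variable {s t : E → V} {f : E → E}

theorem isPath_map (hf : IsQuivAut s t f) {l : List E} (hl : IsPath s t l) :
    IsPath s t (l.map f) := by
  refine ⟨by simpa using hl.1, ?_⟩
  rw [List.Chain', List.isChain_map]
  exact hl.2.imp fun {a b} h => (hf.2 a b).mp h

protected theorem symm (hf : IsQuivAut s t f) :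
    IsQuivAut s t (Equiv.ofBijective f hf.1).symm := by
  refine ⟨Equiv.bijective _, fun x y => ?_⟩
  simpa only [Equiv.ofBijective_apply_symm_apply] using
    (hf.2 ((Equiv.ofBijective f hf.1).symm x) ((Equiv.ofBijective f hf.1).symm y)).symm

theorem map_mem_startSet (hf : IsQuivAut s t f) {m : ℕ} {a : E} (ha : a ∈ startSet s t m) :
    f a ∈ startSet s t m := by
  obtain ⟨x, hx, hax, hlen⟩ := ha
  exact ⟨x.map f, hf.isPath_map hx, hf.isPath_map hax, by simpa using hlen⟩

theorem map_mem_startSet_iff (hf : IsQuivAut s t f) {m : ℕ} {a : E} :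
    f a ∈ startSet s t m ↔ a ∈ startSet s t m := by
  refine ⟨fun h => ?_, hf.map_mem_startSet⟩
  simpa only [Equiv.ofBijective_symm_apply_apply] using hf.symm.map_mem_startSet h

theorem map_mem_edgesQ' (hf : IsQuivAut s t f) {m : ℕ} {l : List E} (hl : l ∈ edgesQ' s t m) :
    l.map f ∈ edgesQ' s t m := by
  rcases hl with ⟨a, ha, rfl⟩ | ⟨a, b, ha, hab, rfl⟩
  · exact Or.inl ⟨f a, hf.map_mem_startSet_iff.not.mpr ha, rfl⟩
  · exact Or.inr ⟨f a, f b, hf.map_mem_startSet ha, hf.isPath_map hab, rfl⟩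

theorem tgt?_map_eq_src?_map_iff (hf : IsQuivAut s t f) (p q : List E) :
    tgt? t (p.map f) = src? s (q.map f) ↔ tgt? t p = src? s q := by
  simp only [tgt?, src?, List.getLast?_map, List.head?_map, Option.map_map]
  rcases p.getLast? with _ | a <;> rcases q.head? with _ | b <;>
    simp only [Option.map_none, Option.map_some, Function.comp_apply, Option.some_inj,
      reduceCtorEq]
  exact (hf.2 a b).symm

theorem isPathQ'_map (hf : IsQuivAut s t f) {m : ℕ} {l : List E} (hl : IsPathQ' s t m l) :
    IsPathQ' s t m (l.map f) := by
  obtain ⟨L, hL, hLedges, hLchain, rfl⟩ := hl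
  refine ⟨L.map (List.map f), by simpa using hL, ?_, ?_, (List.map_flatten ..).symm⟩
  · simp only [List.mem_map, forall_exists_index, and_imp, forall_apply_eq_imp_iff₂]
    exact fun p hp => hf.map_mem_edgesQ' (hLedges p hp)
  · rw [List.Chain', List.isChain_map]
    exact hLchain.imp fun {p q} h => (hf.tgt?_map_eq_src?_map_iff p q).mpr h

theorem bijOn_map (hf : IsQuivAut s t f) {A : Set (List E)}
    (hA : ∀ g, IsQuivAut s t g → Set.MapsTo (List.map g) A A) :
    Set.BijOn (List.map f) A A :=
  (Equiv.listEquivOfEquiv (Equiv.ofBijective f hf.1)).bijOn' (hA f hf) (hA _ hf.symm)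

end IsQuivAut

theorem aut_preserves_pathQ'_and_restricts_general (s t : E → V) (m : ℕ)
    (f : E → E) (hf : IsQuivAut s t f) :
    (List.map f '' {l : List E | IsPathQ' s t m l} = {l : List E | IsPathQ' s t m l}) ∧
    IsQuivAutOn s t (edgesQ' s t m) (List.map f) :=
  ⟨(hf.bijOn_map (A := {l | IsPathQ' s t m l}) fun _ hg _ => hg.isPathQ'_map).image_eq,
    hf.bijOn_map fun _ hg _ => hg.map_mem_edgesQ',
    fun p _ q _ => (hf.tgt?_map_eq_src?_map_iff p q).symm⟩

/-- Every automorphism `f` of a finite quiver without cycles of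
length `m` satisfies `f(Path(Q')) = Path(Q')`, and its restriction to the arrow set
`E'` of `Q'` is an automorphism of `Q'`. -/
theorem aut_preserves_pathQ'_and_restricts [Finite V] [Finite E] (s t : E → V)
    (hQ : NoCycles s t) (m : ℕ) (hm : IsMaxPathLen s t m)
    (f : E → E) (hf : IsQuivAut s t f) :
    (List.map f '' {l : List E | IsPathQ' s t m l} = {l : List E | IsPathQ' s t m l}) ∧
    IsQuivAutOn s t (edgesQ' s t m) (List.map f) :=
  aut_preserves_pathQ'_and_restricts_general s t m f hf

end
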